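/- For any real symmetric matrix Y, matrices D, E of compatible dimensions, and any scalar ε > 0, if Y + ε D Dᵀ + ε⁻¹ Eᵀ E < 0 then Y + D F E + Eᵀ Fᵀ Dᵀ < 0 for every matrix F with Fᵀ F ≤ I. -/

import Mathlib

open Matrix

/-- Easy direction of the uncertainty bounding lemma. -/
theorem stmt_1 (n p q : ℕ)
    (Y : Matrix (Fin n) (Fin n) ℝ) (hY : Y.IsSymm)
    (D : Matrix (Fin n) (Fin p) ℝ) (E : Matrix (Fin q) (Fin n) ℝ)
    (ε : ℝ) (hε : 0 < ε)
    (h : (-(Y + ε • (D * Dᵀ) + ε⁻¹ • (Eᵀ * E))).PosDef) :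
    ∀ F : Matrix (Fin p) (Fin q) ℝ, (1 - Fᵀ * F).PosSemidef →
      (-(Y + D * F * E + Eᵀ * Fᵀ * Dᵀ)).PosDef := by
  intro F hF
  obtain ⟨hherm, hpd⟩ := posDef_iff_dotProduct_mulVec.mp h
  obtain ⟨_, hps⟩ := posSemidef_iff_dotProduct_mulVec.mp hF
  refine posDef_iff_dotProduct_mulVec.mpr ⟨?_, ?_⟩
  · have ht : (-(Y + D * F * E + Eᵀ * Fᵀ * Dᵀ))ᵀ = -(Y + D * F * E + Eᵀ * Fᵀ * Dᵀ) := by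
      simp [transpose_add, transpose_mul, hY.eq, Matrix.mul_assoc]
      abel
    exact isHermitian_iff_isSymm.mpr ht
  · intro x hx
    have h1 := hpd hx
    set e : Fin q → ℝ := E *ᵥ x with he
    have h2 := hps e
    set a : Fin p → ℝ := x ᵥ* D with ha
    set b : Fin p → ℝ := F *ᵥ e with hb
    simp only [star_trivial] at h1 h2 ⊢
    have hDFE : x ⬝ᵥ (D * F * E) *ᵥ x = a ⬝ᵥ b := by
      rw [← mulVec_mulVec, ← mulVec_mulVec, dotProduct_mulVec]
    have hDFEt : x ⬝ᵥ (Eᵀ * Fᵀ * Dᵀ) *ᵥ x = a ⬝ᵥ b := by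
      have : Eᵀ * Fᵀ * Dᵀ = (D * F * E)ᵀ := by
        simp [transpose_mul, Matrix.mul_assoc]
      rw [this, ← hDFE, dotProduct_mulVec, vecMul_transpose, dotProduct_comm]
    have hDD : x ⬝ᵥ (D * Dᵀ) *ᵥ x = a ⬝ᵥ a := by
      rw [← mulVec_mulVec, dotProduct_mulVec, mulVec_transpose]
    have hEE : x ⬝ᵥ (Eᵀ * E) *ᵥ x = e ⬝ᵥ e := by
      rw [← mulVec_mulVec, dotProduct_mulVec, ← mulVec_transpose, transpose_transpose, he]
    have hFF : e ⬝ᵥ (Fᵀ * F) *ᵥ e = b ⬝ᵥ b := by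
      calc e ⬝ᵥ (Fᵀ * F) *ᵥ e = (e ᵥ* (Fᵀ * F)) ⬝ᵥ e := dotProduct_mulVec e _ e
        _ = ((e ᵥ* Fᵀ) ᵥ* F) ⬝ᵥ e := by rw [vecMul_vecMul]
        _ = (b ᵥ* F) ⬝ᵥ e := by rw [vecMul_transpose, ← hb]
        _ = b ⬝ᵥ F *ᵥ e := (dotProduct_mulVec b F e).symm
        _ = b ⬝ᵥ b := by rw [← hb]
    clear_value e a b
    have hb2 : b ⬝ᵥ b ≤ e ⬝ᵥ e := by
      have heq : e ⬝ᵥ (1 - Fᵀ * F) *ᵥ e = e ⬝ᵥ e - b ⬝ᵥ b := by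
        rw [sub_mulVec, dotProduct_sub, one_mulVec, hFF]
      rw [heq] at h2
      linarith
    have hcauchy : 2 * (a ⬝ᵥ b) ≤ ε * (a ⬝ᵥ a) + ε⁻¹ * (b ⬝ᵥ b) := by
      set d : Fin p → ℝ := a - ε⁻¹ • b with hd
      have h0 : 0 ≤ d ⬝ᵥ d := by
        apply Finset.sum_nonneg
        intro i _
        exact mul_self_nonneg _
      have hexp : d ⬝ᵥ d = a ⬝ᵥ a - 2 * ε⁻¹ * (a ⬝ᵥ b) + ε⁻¹ * ε⁻¹ * (b ⬝ᵥ b) := by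
        simp only [hd, sub_dotProduct, dotProduct_sub, smul_dotProduct, dotProduct_smul,
          dotProduct_comm b a, smul_eq_mul]
        ring
      have hinv : ε * ε⁻¹ = 1 := mul_inv_cancel₀ hε.ne'
      have key : ε * (d ⬝ᵥ d) = ε * (a ⬝ᵥ a) + ε⁻¹ * (b ⬝ᵥ b) - 2 * (a ⬝ᵥ b) := by
        rw [hexp]
        field_simp
        ring
      nlinarith [mul_nonneg hε.le h0]
    have h1' : 0 < -(x ⬝ᵥ Y *ᵥ x + ε * (a ⬝ᵥ a) + ε⁻¹ * (e ⬝ᵥ e)) := by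
      have := h1
      simp only [neg_mulVec, add_mulVec, smul_mulVec, dotProduct_neg, dotProduct_add,
        dotProduct_smul, smul_eq_mul, hDD, hEE] at this
      linarith
    have hb2' : ε⁻¹ * (b ⬝ᵥ b) ≤ ε⁻¹ * (e ⬝ᵥ e) :=
      mul_le_mul_of_nonneg_left hb2 (inv_pos.mpr hε).le
    simp only [neg_mulVec, add_mulVec, dotProduct_neg, dotProduct_add, hDFE, hDFEt]
    linarith
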